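/- arXiv:2202.00248 — 2 statements merged into one kernel-verified Lean document; each statement's English description precedes it below -/
import Mathlib

section
/- Let R be a finite commutative local Frobenius ring of characteristic p^b with generating character χ, and let C ⊆ R^{2n} be an additive code (a Z_{p^b}-module). Then C has a generating set as a Z_{p^b}-module consisting only of isotropic generators and hyperbolic pairs, and the number c of hyperbolic pairs satisfies 2c = rank(C / (C ∩ C^{⊥_χ})). -/
open scoped BigOperators

/-- The symplectic inner product on `R^{2n}`: `⟨(x,y) | (x',y')⟩ₛ = y·x' − y'·x`. -/
def symp {R : Type*} [CommRing R] {n : ℕ}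
    (u v : (Fin n → R) × (Fin n → R)) : R :=
  dotProduct u.2 v.1 - dotProduct v.2 u.1

/-- Puncturing a vector of `R^{2(n+c)}` at the coordinates
`n+1,…,n+c, 2n+1,…,2n+2c` (the last `c` coordinates of each half). -/
def punct {R : Type*} (n c : ℕ)
    (u : (Fin (n + c) → R) × (Fin (n + c) → R)) :
    (Fin n → R) × (Fin n → R) :=
  (fun i => u.1 (Fin.castAdd c i), fun i => u.2 (Fin.castAdd c i))

/-- The `χ`-symplectic dual (as a set) of a set `C ⊆ R^{2n}`. -/
def chiDualSet {R : Type*} [CommRing R] {n : ℕ} (χ : R → ℂ)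
    (C : Set ((Fin n → R) × (Fin n → R))) : Set ((Fin n → R) × (Fin n → R)) :=
  {v | ∀ c ∈ C, χ (symp c v) = 1}

/-- The `t`-th `χ`-symplectic dual (as a set): symplectic products whose character
value is a `pt`-th root of unity (`pt = p^t`). -/
def chiDualSetT {R : Type*} [CommRing R] {n : ℕ} (χ : R → ℂ)
    (C : Set ((Fin n → R) × (Fin n → R))) (pt : ℕ) :
    Set ((Fin n → R) × (Fin n → R)) :=
  {v | ∀ c ∈ C, (χ (symp c v)) ^ pt = 1}

/-- The rank (minimal number of generators) of the quotient of the additive group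
generated by `C` modulo `D`: the least `k` such that `k` elements of `C` generate
`C` modulo `D`. -/
noncomputable def relRank {V : Type*} [AddCommGroup V] (C D : Set V) : ℕ :=
  sInf {k : ℕ | ∃ f : Fin k → V, (∀ i, f i ∈ C) ∧
    ∀ x ∈ C, ∃ g : Fin k → ℤ, x - ∑ i, g i • f i ∈ D}

/-!
Inside `C`, pick a pair `x, y` whose pairing value `χ⟨x | y⟩` has maximal order. All these orders
are powers of `p`, so every `χ⟨x | v⟩` and `χ⟨y | v⟩` with `v ∈ C` is a power of `χ⟨x | y⟩`, and
subtracting suitable multiples of `y` and `x` splits `C = ⟨x, y⟩ + (C ∩ x^⊥ ∩ y^⊥)`. Induction on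
`C` produces `c` hyperbolic pairs which, together with the radical `C ∩ C^⊥` taken as isotropic
generators, generate `C`.

For the rank, pair `C` against multiples of `-yᵢ` and `xᵢ` scaled so that their pairings with
`xᵢ`, `yᵢ` have order exactly `p`. These characters kill `C ∩ C^⊥` and `p C`, and separate the
`p ^ (2c)` elements `∑ aᵢ xᵢ + ∑ bᵢ yᵢ` with `0 ≤ aᵢ, bᵢ < p`; but `k` generators modulo the
radical leave room for at most `p ^ k` values. Hence `2c ≤ k`, and the pairs themselves give `2c`
generators.
-/

open AddSubgroup Set

lemma Nat.dvd_of_le_of_dvd_prime_pow {p b m n : ℕ} (hp : p.Prime) (hm : m ∣ p ^ b)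
    (hn : n ∣ p ^ b) (hmn : m ≤ n) : m ∣ n := by
  obtain ⟨i, -, rfl⟩ := (Nat.dvd_prime_pow hp).mp hm
  obtain ⟨j, -, rfl⟩ := (Nat.dvd_prime_pow hp).mp hn
  exact pow_dvd_pow p ((Nat.pow_le_pow_iff_right hp.one_lt).mp hmn)

lemma AddChar.map_sum_eq_prod {ι A M : Type*} [AddCommMonoid A] [CommMonoid M] (ψ : AddChar A M)
    (s : Finset ι) (f : ι → A) : ψ (∑ i ∈ s, f i) = ∏ i ∈ s, ψ (f i) := by
  classical
  induction s using Finset.induction_on with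
  | empty => simp
  | insert i s hi ih => rw [Finset.sum_insert hi, Finset.prod_insert hi, map_add_eq_mul, ih]

section Generators

variable {V : Type*} [AddCommGroup V]

lemma subset_of_closure_sup_eq {S : Set V} {H C : AddSubgroup V} (h : closure S ⊔ H = C) :
    S ⊆ C :=
  (closure_le _).mp (le_sup_left.trans h.le)

lemma relRank_eq_of_generates {ι : Type*} [Fintype ι] {C D : Set V} (f : ι → V)
    (hf : ∀ i, f i ∈ C) (hgen : ∀ x ∈ C, ∃ g : ι → ℤ, x - ∑ i, g i • f i ∈ D)
    (hmin : ∀ (k : ℕ) (f' : Fin k → V), (∀ i, f' i ∈ C) →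
      (∀ x ∈ C, ∃ g : Fin k → ℤ, x - ∑ i, g i • f' i ∈ D) → Fintype.card ι ≤ k) :
    relRank C D = Fintype.card ι := by
  let e := (Fintype.equivFin ι).symm
  have hmem : Fintype.card ι ∈ {k : ℕ | ∃ f : Fin k → V, (∀ i, f i ∈ C) ∧
      ∀ x ∈ C, ∃ g : Fin k → ℤ, x - ∑ i, g i • f i ∈ D} := by
    refine ⟨f ∘ e, fun i => hf _, fun x hx => ?_⟩
    obtain ⟨g, hg⟩ := hgen x hx
    exact ⟨g ∘ e, by simpa only [Function.comp_apply, e.sum_comp (fun i => g i • f i)] using hg⟩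
  exact le_antisymm (Nat.sInf_le hmem)
    (le_csInf ⟨_, hmem⟩ fun k ⟨f', hf', hgen'⟩ => hmin k f' hf' hgen')

lemma zsmul_eq_ediv_smul_add_val_smul (p : ℕ) [NeZero p] (g : ℤ) (v : V) :
    g • v = (g / p) • (p • v) + (g : ZMod p).val • v := by
  rw [← natCast_zsmul v p, ← natCast_zsmul v, smul_smul, ← add_zsmul, ZMod.val_intCast,
    Int.ediv_mul_add_emod]

lemma card_image_mk_le_pow {C N : AddSubgroup V} {p k : ℕ} [NeZero p] (hpC : ∀ v ∈ C, p • v ∈ N)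
    (f : Fin k → V) (hf : ∀ j, f j ∈ C) (hgen : ∀ v ∈ C, ∃ g : Fin k → ℤ, v - ∑ j, g j • f j ∈ N) :
    Nat.card ((QuotientAddGroup.mk : V → V ⧸ N) '' C) ≤ p ^ k := by
  calc Nat.card ((QuotientAddGroup.mk : V → V ⧸ N) '' C)
      ≤ Nat.card (range fun m : Fin k → ZMod p => ((∑ j, (m j).val • f j : V) : V ⧸ N)) := by
        refine Nat.card_mono (Set.finite_range _) ?_
        rintro _ ⟨v, hv, rfl⟩
        obtain ⟨g, hg⟩ := hgen v hv
        refine ⟨fun j => (g j : ZMod p), (QuotientAddGroup.eq_iff_sub_mem.mpr ?_).symm⟩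
        have hsplit : v - ∑ j, (g j : ZMod p).val • f j =
            (v - ∑ j, g j • f j) + ∑ j, (g j / p) • (p • f j) := by
          simp only [zsmul_eq_ediv_smul_add_val_smul p (g _) (f _), Finset.sum_add_distrib]
          abel
        rw [hsplit]
        exact add_mem hg (sum_mem fun j _ => zsmul_mem (hpC _ (hf j)) _)
    _ ≤ Nat.card (Fin k → ZMod p) := Finite.card_range_le _
    _ = p ^ k := by simp

end Generators

section Pairing

variable {V A K : Type*} [AddCommGroup V] [AddCommGroup A] [Field K]
  (ω : V →+ V →+ A) (ψ : AddChar A K)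

def chiOrth (u : V) : AddSubgroup V where
  carrier := {v | ψ (ω u v) = 1}
  add_mem' {v w} hv hw := by simp_all [AddChar.map_add_eq_mul]
  zero_mem' := by simp
  neg_mem' {v} hv := by simp_all [AddChar.map_neg_eq_inv]

def chiDual (S : Set V) : AddSubgroup V := ⨅ u ∈ S, chiOrth ω ψ u

structure IsHyperbolicSystem {ι : Type*} (x y : ι → V) : Prop where
  isotropic_x : ∀ i j, ψ (ω (x i) (x j)) = 1
  isotropic_y : ∀ i j, ψ (ω (y i) (y j)) = 1
  orthogonal : ∀ i j, i ≠ j → ψ (ω (x i) (y j)) = 1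
  ne_one : ∀ i, ψ (ω (x i) (y i)) ≠ 1

variable {ω ψ}

@[simp] lemma mem_chiOrth {u v : V} : v ∈ chiOrth ω ψ u ↔ ψ (ω u v) = 1 := Iff.rfl

@[simp] lemma mem_chiDual {S : Set V} {v : V} :
    v ∈ chiDual ω ψ S ↔ ∀ u ∈ S, ψ (ω u v) = 1 := by
  simp [chiDual, AddSubgroup.mem_iInf]

lemma coe_chiDual (S : Set V) : (chiDual ω ψ S : Set V) = {v | ∀ u ∈ S, ψ (ω u v) = 1} :=
  Set.ext fun _ => mem_chiDual

lemma chiDual_anti {S T : Set V} (h : S ⊆ T) : chiDual ω ψ T ≤ chiDual ω ψ S :=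
  fun _ hv => mem_chiDual.mpr fun u hu => mem_chiDual.mp hv u (h hu)

lemma AddMonoidHom.swap_eq_neg_of_alternating (hω : ∀ v, ω v v = 0) (u v : V) :
    ω v u = -ω u v := by
  have h := hω (u + v)
  simp only [map_add, AddMonoidHom.add_apply, hω, zero_add, add_zero] at h
  exact eq_neg_of_add_eq_zero_left h

lemma pairing_swap (hω : ∀ v, ω v v = 0) (u v : V) : ψ (ω v u) = (ψ (ω u v))⁻¹ := by
  rw [ω.swap_eq_neg_of_alternating hω, AddChar.map_neg_eq_inv]

lemma pairing_comm_eq_one (hω : ∀ v, ω v v = 0) {u v : V} :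
    ψ (ω v u) = 1 ↔ ψ (ω u v) = 1 := by
  rw [pairing_swap hω, inv_eq_one]

lemma mem_chiDual_iff_le_chiOrth (hω : ∀ v, ω v v = 0) {C : AddSubgroup V} {v : V} :
    v ∈ chiDual ω ψ C ↔ C ≤ chiOrth ω ψ v := by
  simp [SetLike.le_def, pairing_comm_eq_one hω]

lemma pairing_pow_eq_one {n : ℕ} (hV : ∀ v : V, n • v = 0) (u v : V) : ψ (ω u v) ^ n = 1 := by
  rw [← AddChar.map_nsmul_eq_pow, ← AddMonoidHom.map_nsmul, hV]
  simp

lemma IsHyperbolicSystem.cons (hω : ∀ v, ω v v = 0) {c : ℕ} {x y : Fin c → V}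
    (h : IsHyperbolicSystem ω ψ x y) {x₀ y₀ : V} (hne : ψ (ω x₀ y₀) ≠ 1)
    (hx : ∀ i, x i ∈ chiOrth ω ψ x₀ ⊓ chiOrth ω ψ y₀)
    (hy : ∀ i, y i ∈ chiOrth ω ψ x₀ ⊓ chiOrth ω ψ y₀) :
    IsHyperbolicSystem ω ψ (Fin.cons x₀ x : Fin (c + 1) → V) (Fin.cons y₀ y) := by
  simp only [AddSubgroup.mem_inf, mem_chiOrth] at hx hy
  refine ⟨fun i j => ?_, fun i j => ?_, fun i j hij => ?_, fun i => ?_⟩ <;>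
  induction i using Fin.cases <;> (try induction j using Fin.cases) <;>
  simp_all [pairing_comm_eq_one hω, h.isotropic_x, h.isotropic_y, h.orthogonal, h.ne_one]

lemma IsHyperbolicSystem.orthogonal_swap (hω : ∀ v, ω v v = 0) {ι : Type*} {x y : ι → V}
    (hxy : IsHyperbolicSystem ω ψ x y) (i j : ι) (hij : i ≠ j) : ψ (ω (y i) (x j)) = 1 :=
  (pairing_comm_eq_one hω).mpr (hxy.orthogonal j i hij.symm)

lemma le_chiOrth_of_closure_sup_eq {S : Set V} {C : AddSubgroup V}
    (hC : closure S ⊔ (C ⊓ chiDual ω ψ C) = C) {u : V} (hu : u ∈ C) (hS : S ⊆ chiOrth ω ψ u) :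
    C ≤ chiOrth ω ψ u :=
  hC.symm.le.trans <|
    sup_le ((closure_le _).mpr hS) fun _ hv => mem_chiDual.mp (mem_inf.mp hv).2 u hu

lemma isOfFinOrder_pairing {n : ℕ} (hn : 0 < n) (hV : ∀ v : V, n • v = 0) (u v : V) :
    IsOfFinOrder (ψ (ω u v)) :=
  isOfFinOrder_iff_pow_eq_one.mpr ⟨n, hn, pairing_pow_eq_one hV u v⟩

lemma prime_dvd_orderOf_pairing {p b : ℕ} (hp : p.Prime) (hV : ∀ v : V, p ^ b • v = 0)
    {u v : V} (hne : ψ (ω u v) ≠ 1) : p ∣ orderOf (ψ (ω u v)) := by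
  obtain ⟨k, -, hk⟩ :=
    (Nat.dvd_prime_pow hp).mp (orderOf_dvd_of_pow_eq_one (pairing_pow_eq_one (ψ := ψ) hV u v))
  rcases k with _ | k
  · exact absurd (orderOf_eq_one_iff.mp hk) hne
  · exact hk ▸ dvd_pow_self p k.succ_ne_zero

lemma IsHyperbolicSystem.le_chiOrth_orderOf_nsmul (hω : ∀ v, ω v v = 0) {ι : Type*}
    {x y : ι → V} (hxy : IsHyperbolicSystem ω ψ x y) {C : AddSubgroup V}
    (hC : closure (range x ∪ range y) ⊔ (C ⊓ chiDual ω ψ C) = C) (i : ι) :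
    C ≤ chiOrth ω ψ (orderOf (ψ (ω (x i) (y i))) • x i) ⊓
      chiOrth ω ψ (orderOf (ψ (ω (x i) (y i))) • y i) := by
  have hxyC := subset_of_closure_sup_eq hC
  refine le_inf (le_chiOrth_of_closure_sup_eq hC (nsmul_mem (hxyC (Or.inl ⟨i, rfl⟩)) _) ?_)
    (le_chiOrth_of_closure_sup_eq hC (nsmul_mem (hxyC (Or.inr ⟨i, rfl⟩)) _) ?_)
  · rintro _ (⟨j, rfl⟩ | ⟨j, rfl⟩)
    · simp [AddChar.map_nsmul_eq_pow, hxy.isotropic_x]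
    · rcases eq_or_ne i j with rfl | hij
      · simp [AddChar.map_nsmul_eq_pow, pow_orderOf_eq_one]
      · simp [AddChar.map_nsmul_eq_pow, hxy.orthogonal i j hij]
  · rintro _ (⟨j, rfl⟩ | ⟨j, rfl⟩)
    · rcases eq_or_ne i j with rfl | hij
      · simp [AddChar.map_nsmul_eq_pow, pairing_swap hω (x i), pow_orderOf_eq_one]
      · simp [AddChar.map_nsmul_eq_pow, hxy.orthogonal_swap hω i j hij]
    · simp [AddChar.map_nsmul_eq_pow, hxy.isotropic_y]

lemma exists_dual_family (hω : ∀ v, ω v v = 0) {p b : ℕ} (hp : p.Prime)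
    (hV : ∀ v : V, p ^ b • v = 0) {ι : Type*} {x y : ι → V} (hxy : IsHyperbolicSystem ω ψ x y)
    {C : AddSubgroup V} (hC : closure (range x ∪ range y) ⊔ (C ⊓ chiDual ω ψ C) = C) :
    ∃ e' : ι ⊕ ι → V, (∀ i, e' i ∈ C) ∧
      (∀ i, orderOf (ψ (ω (e' i) (Sum.elim x y i))) = p) ∧
      (∀ i j, i ≠ j → ψ (ω (e' i) (Sum.elim x y j)) = 1) ∧
      ∀ v ∈ C, p • v ∈ chiDual ω ψ (range e') := by
  have hxyC := subset_of_closure_sup_eq hC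
  set o : ι → ℕ := fun i => orderOf (ψ (ω (x i) (y i)))
  have hpo : ∀ i, p ∣ o i := fun i => prime_dvd_orderOf_pairing hp hV (hxy.ne_one i)
  have hord : ∀ i, orderOf (ψ (ω (x i) (y i)) ^ (o i / p)) = p := fun i =>
    orderOf_pow_orderOf_div (isOfFinOrder_pairing (pow_pos hp.pos b) hV _ _).orderOf_pos.ne' (hpo i)
  -- scaling by `o i / p` cuts the diagonal pairings down to order `p`, while `p • e' i` is
  -- `o i • (-y i)` or `o i • x i`, which pairs trivially with all of `C`
  refine ⟨Sum.elim (fun i => (o i / p) • -y i) (fun i => (o i / p) • x i), ?_, ?_, ?_, ?_⟩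
  · rintro (i | i)
    · exact nsmul_mem (neg_mem (hxyC (Or.inr ⟨i, rfl⟩))) _
    · exact nsmul_mem (hxyC (Or.inl ⟨i, rfl⟩)) _
  · rintro (i | i)
    · simpa [AddChar.map_nsmul_eq_pow, ω.swap_eq_neg_of_alternating hω (x i) (y i)] using hord i
    · simpa [AddChar.map_nsmul_eq_pow] using hord i
  · rintro (i | i) (j | j) hij
    · simp [AddChar.map_nsmul_eq_pow, AddChar.map_neg_eq_inv,
        hxy.orthogonal_swap hω i j (by simpa using hij)]
    · simp [AddChar.map_nsmul_eq_pow, AddChar.map_neg_eq_inv, hxy.isotropic_y]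
    · simp [AddChar.map_nsmul_eq_pow, hxy.isotropic_x]
    · simp [AddChar.map_nsmul_eq_pow, hxy.orthogonal i j (by simpa using hij)]
  · intro v hv
    have hvo := fun i => mem_inf.mp (hxy.le_chiOrth_orderOf_nsmul hω hC i hv)
    simp only [mem_chiOrth, map_nsmul, AddMonoidHom.nsmul_apply, AddChar.map_nsmul_eq_pow] at hvo
    refine mem_chiDual.mpr ?_
    rintro _ ⟨i | i, rfl⟩
    · simp [AddChar.map_nsmul_eq_pow, AddChar.map_neg_eq_inv, ← pow_mul,
        Nat.mul_div_cancel' (hpo i)]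
      exact (hvo i).2
    · simp [AddChar.map_nsmul_eq_pow, ← pow_mul, Nat.mul_div_cancel' (hpo i)]
      exact (hvo i).1

lemma inf_chiDual_le_of_closure_sup_eq (hω : ∀ v, ω v v = 0) {C : AddSubgroup V} {x₀ y₀ : V}
    (hsplit : closure {x₀, y₀} ⊔ (C ⊓ chiOrth ω ψ x₀ ⊓ chiOrth ω ψ y₀) = C) :
    C ⊓ chiOrth ω ψ x₀ ⊓ chiOrth ω ψ y₀ ⊓
        chiDual ω ψ (C ⊓ chiOrth ω ψ x₀ ⊓ chiOrth ω ψ y₀ : AddSubgroup V) ≤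
      C ⊓ chiDual ω ψ C := by
  intro v hv
  obtain ⟨hvC', hvdual⟩ := mem_inf.mp hv
  obtain ⟨⟨hvC, hvx₀⟩, hvy₀⟩ := mem_inf.mp hvC'
  refine mem_inf.mpr ⟨hvC, (mem_chiDual_iff_le_chiOrth hω).mpr ?_⟩
  rw [← hsplit]
  refine sup_le ((closure_le _).mpr (Set.insert_subset ?_ (Set.singleton_subset_iff.mpr ?_)))
    ((mem_chiDual_iff_le_chiOrth hω).mp hvdual)
  · exact (pairing_comm_eq_one hω).mpr hvx₀
  · exact (pairing_comm_eq_one hω).mpr hvy₀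

variable [Finite V]

theorem exists_splitting_pair (hω : ∀ v, ω v v = 0) {p b : ℕ} (hp : p.Prime)
    (hV : ∀ v : V, p ^ b • v = 0) {C : AddSubgroup V} (hC : ∃ u ∈ C, ∃ v ∈ C, ψ (ω u v) ≠ 1) :
    ∃ x ∈ C, ∃ y ∈ C, ψ (ω x y) ≠ 1 ∧
      closure {x, y} ⊔ (C ⊓ chiOrth ω ψ x ⊓ chiOrth ω ψ y) = C := by
  obtain ⟨u₀, hu₀, v₀, hv₀, hne⟩ := hC
  obtain ⟨⟨x, y⟩, ⟨hx, hy⟩, hmax⟩ := Set.exists_max_image ((C : Set V) ×ˢ (C : Set V))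
    (fun q => orderOf (ψ (ω q.1 q.2))) (Set.toFinite _) ⟨(u₀, v₀), hu₀, hv₀⟩
  replace hx : x ∈ C := hx
  replace hy : y ∈ C := hy
  set ζ := ψ (ω x y)
  -- all orders are powers of `p`, so the maximal one is a multiple of all the others
  have hpow : ∀ u ∈ C, ∀ v ∈ C, ψ (ω u v) ^ orderOf ζ = 1 := fun u hu v hv =>
    orderOf_dvd_iff_pow_eq_one.mp <| Nat.dvd_of_le_of_dvd_prime_pow hp
      (orderOf_dvd_of_pow_eq_one (pairing_pow_eq_one hV u v))
      (orderOf_dvd_of_pow_eq_one (pairing_pow_eq_one hV x y)) (hmax (u, v) ⟨hu, hv⟩)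
  have hζ : ζ ≠ 1 := fun h => hne (by simpa [h] using hpow u₀ hu₀ v₀ hv₀)
  have : NeZero (orderOf ζ) := ⟨(isOfFinOrder_pairing (pow_pos hp.pos b) hV x y).orderOf_pos.ne'⟩
  have hζ0 : ζ ≠ 0 := (ψ.val_isUnit _).ne_zero
  refine ⟨x, hx, y, hy, hζ, le_antisymm (sup_le ?_ (inf_le_left.trans inf_le_left)) fun v hv => ?_⟩
  · rw [closure_le]
    exact Set.insert_subset hx (Set.singleton_subset_iff.mpr hy)
  obtain ⟨s, -, hs⟩ := (IsPrimitiveRoot.orderOf ζ).eq_pow_of_pow_eq_one (hpow x hx v hv)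
  obtain ⟨t, -, ht⟩ := (IsPrimitiveRoot.orderOf ζ).eq_pow_of_pow_eq_one (hpow y hy v hv)
  have hv' : v - s • y + t • x ∈ C ⊓ chiOrth ω ψ x ⊓ chiOrth ω ψ y := by
    refine mem_inf.mpr ⟨mem_inf.mpr
      ⟨add_mem (sub_mem hv (nsmul_mem hy s)) (nsmul_mem hx t), ?_⟩, ?_⟩
    · simp only [mem_chiOrth, map_add, map_sub, map_nsmul, hω, AddChar.map_add_eq_mul,
        AddChar.map_sub_eq_div, AddChar.map_nsmul_eq_pow, AddChar.map_zero_eq_one, one_pow,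
        mul_one, ← hs]
      exact div_self (pow_ne_zero s hζ0)
    · simp only [mem_chiOrth, map_add, map_sub, map_nsmul, hω, AddChar.map_add_eq_mul,
        AddChar.map_sub_eq_div, AddChar.map_nsmul_eq_pow, AddChar.map_zero_eq_one, one_pow,
        div_one, inv_pow, ← ht, pairing_swap hω x y]
      exact mul_inv_cancel₀ (pow_ne_zero t hζ0)
  rw [show v = (s • y - t • x) + (v - s • y + t • x) by abel]
  exact add_mem (mem_sup_left (sub_mem (nsmul_mem (subset_closure (by simp)) s)
    (nsmul_mem (subset_closure (by simp)) t))) (mem_sup_right hv')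

theorem exists_hyperbolic_decomposition (hω : ∀ v, ω v v = 0) {p b : ℕ} (hp : p.Prime)
    (hV : ∀ v : V, p ^ b • v = 0) (C : AddSubgroup V) :
    ∃ (c : ℕ) (x y : Fin c → V), IsHyperbolicSystem ω ψ x y ∧
      closure (range x ∪ range y) ⊔ (C ⊓ chiDual ω ψ C) = C := by
  induction C using WellFoundedLT.induction with | _ C ih =>
  by_cases hiso : ∃ u ∈ C, ∃ v ∈ C, ψ (ω u v) ≠ 1
  swap
  · push Not at hiso
    refine ⟨0, Fin.elim0, Fin.elim0, ⟨finZeroElim, finZeroElim, finZeroElim, finZeroElim⟩, ?_⟩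
    simpa [SetLike.le_def] using fun v hv u hu => hiso u hu v hv
  obtain ⟨x₀, hx₀, y₀, hy₀, hne, hsplit⟩ := exists_splitting_pair hω hp hV hiso
  set C' := C ⊓ chiOrth ω ψ x₀ ⊓ chiOrth ω ψ y₀
  have hC'C : C' ≤ C := inf_le_left.trans inf_le_left
  have hy₀C' : y₀ ∉ C' := fun h => hne (mem_inf.mp (mem_inf.mp h).1).2
  obtain ⟨c, x, y, hxy, hgen⟩ := ih C' (lt_of_le_of_ne hC'C fun h => hy₀C' (h ▸ hy₀))
  have hxyC' := subset_of_closure_sup_eq hgen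
  have hC'orth : C' ≤ chiOrth ω ψ x₀ ⊓ chiOrth ω ψ y₀ :=
    le_inf (inf_le_left.trans inf_le_right) inf_le_right
  refine ⟨c + 1, Fin.cons x₀ x, Fin.cons y₀ y, hxy.cons hω hne
    (fun i => hC'orth (hxyC' (Or.inl ⟨i, rfl⟩))) (fun i => hC'orth (hxyC' (Or.inr ⟨i, rfl⟩))), ?_⟩
  rw [Fin.range_cons, Fin.range_cons, show insert x₀ (range x) ∪ insert y₀ (range y) =
      {x₀, y₀} ∪ (range x ∪ range y) by ext; simp only [mem_union, mem_insert_iff]; tauto,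
    AddSubgroup.closure_union, sup_assoc]
  refine le_antisymm (sup_le (hsplit ▸ le_sup_left)
    (sup_le (((closure_le _).mpr hxyC').trans hC'C) inf_le_left)) ?_
  calc C = closure {x₀, y₀} ⊔ C' := hsplit.symm
    _ = closure {x₀, y₀} ⊔ (closure (range x ∪ range y) ⊔ (C' ⊓ chiDual ω ψ C')) := by rw [hgen]
    _ ≤ _ := sup_le_sup_left (sup_le_sup_left (inf_chiDual_le_of_closure_sup_eq hω hsplit) _) _

lemma pow_card_le_card_image_mk {ι : Type*} [Fintype ι] {C : AddSubgroup V} {p : ℕ}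
    {e e' : ι → V} (he : ∀ i, e i ∈ C) (hdiag : ∀ i, orderOf (ψ (ω (e' i) (e i))) = p)
    (hoff : ∀ i j, i ≠ j → ψ (ω (e' i) (e j)) = 1) :
    p ^ Fintype.card ι ≤
      Nat.card ((QuotientAddGroup.mk : V → V ⧸ chiDual ω ψ (range e')) '' C) := by
  have heval : ∀ (a : ι → ℕ) i, ψ (ω (e' i) (∑ j, a j • e j)) = ψ (ω (e' i) (e i)) ^ a i := by
    intro a i
    rw [map_sum, AddChar.map_sum_eq_prod, Finset.prod_eq_single i (fun j _ hji => ?_) (by simp)]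
    · simp [AddChar.map_nsmul_eq_pow]
    · simp [AddChar.map_nsmul_eq_pow, hoff i j hji.symm]
  let F : (ι → Fin p) → (QuotientAddGroup.mk : V → V ⧸ chiDual ω ψ (range e')) '' C :=
    fun a => ⟨_, ∑ j, (a j : ℕ) • e j, sum_mem fun j _ => nsmul_mem (he j) _, rfl⟩
  have hF : Function.Injective F := by
    intro a a' haa'
    have hdiff := QuotientAddGroup.eq_iff_sub_mem.mp (congrArg Subtype.val haa')
    funext i
    have hi := (mem_chiDual.mp hdiff) (e' i) ⟨i, rfl⟩
    rw [map_sub, AddChar.map_sub_eq_div, div_eq_one_iff_eq (ψ.val_isUnit _).ne_zero, heval,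
      heval, (orderOf_pos_iff.mp (hdiag i ▸ (a i).pos)).pow_inj_mod, hdiag,
      Nat.mod_eq_of_lt (a i).isLt, Nat.mod_eq_of_lt (a' i).isLt] at hi
    exact Fin.ext hi
  simpa [Nat.card_fun] using Nat.card_le_card_of_injective F hF

theorem relRank_eq_two_mul (hω : ∀ v, ω v v = 0) {p b : ℕ} (hp : p.Prime)
    (hV : ∀ v : V, p ^ b • v = 0) {c : ℕ} {x y : Fin c → V} (hxy : IsHyperbolicSystem ω ψ x y)
    {C : AddSubgroup V} (hC : closure (range x ∪ range y) ⊔ (C ⊓ chiDual ω ψ C) = C) :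
    relRank (C : Set V) (chiDual ω ψ C) = 2 * c := by
  have : NeZero p := ⟨hp.ne_zero⟩
  obtain ⟨e', he', hdiag, hoff, htors⟩ := exists_dual_family hω hp hV hxy hC
  have he : ∀ i, Sum.elim x y i ∈ C :=
    range_subset_iff.mp (Set.Sum.elim_range x y ▸ subset_of_closure_sup_eq hC)
  have hgen : ∀ v ∈ C, ∃ g : Fin c ⊕ Fin c → ℤ,
      v - ∑ i, g i • Sum.elim x y i ∈ chiDual ω ψ C := by
    intro v hv
    rw [← hC] at hv
    obtain ⟨w, hw, d, hd, rfl⟩ := mem_sup.mp hv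
    rw [← Set.Sum.elim_range, mem_closure_range_iff_of_fintype] at hw
    obtain ⟨g, rfl⟩ := hw
    exact ⟨g, by simpa using (mem_inf.mp hd).2⟩
  have hdual : chiDual ω ψ C ≤ chiDual ω ψ (range e') := chiDual_anti (range_subset_iff.mpr he')
  refine (relRank_eq_of_generates _ he hgen fun k f hf hfgen => ?_).trans (by simp [two_mul])
  rw [← Nat.pow_le_pow_iff_right hp.one_lt]
  exact (pow_card_le_card_image_mk he hdiag hoff).trans
    (card_image_mk_le_pow htors f hf fun v hv => (hfgen v hv).imp fun _ hg => hdual hg)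

theorem exists_isotropic_hyperbolic_generators (hω : ∀ v, ω v v = 0) {p b : ℕ} (hp : p.Prime)
    (hV : ∀ v : V, p ^ b • v = 0) (C : AddSubgroup V) :
    ∃ (c d : ℕ) (u1 u2 : Fin c → V) (z : Fin d → V),
      closure (range u1 ∪ range u2 ∪ range z) = C ∧
      (∀ j, ∀ h ∈ range u1 ∪ range u2 ∪ range z, ψ (ω (z j) h) = 1) ∧
      (∀ i, ψ (ω (u1 i) (u2 i)) ≠ 1) ∧
      (∀ i, ∀ h ∈ range u1 ∪ range u2 ∪ range z, h ≠ u2 i → ψ (ω (u1 i) h) = 1) ∧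
      (∀ i, ∀ h ∈ range u1 ∪ range u2 ∪ range z, h ≠ u1 i → ψ (ω (u2 i) h) = 1) ∧
      2 * c = relRank (C : Set V) (chiDual ω ψ C) := by
  obtain ⟨c, x, y, hxy, hC⟩ := exists_hyperbolic_decomposition (ψ := ψ) hω hp hV C
  set D := C ⊓ chiDual ω ψ C
  let z : Fin (Nat.card D) → V := fun j => (Finite.equivFin D).symm j
  have hz : range z = D := by
    rw [show z = Subtype.val ∘ (Finite.equivFin D).symm from rfl,
      (Finite.equivFin D).symm.surjective.range_comp, Subtype.range_coe]
  have hgenC : range x ∪ range y ∪ range z ⊆ C :=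
    union_subset (subset_of_closure_sup_eq hC) (hz ▸ fun _ hv => (mem_inf.mp hv).1)
  have hzD : ∀ j, z j ∈ chiDual ω ψ C := fun j => (mem_inf.mp ((Finite.equivFin D).symm j).2).2
  have hperp : ∀ j, ∀ h ∈ range x ∪ range y ∪ range z, ψ (ω h (z j)) = 1 :=
    fun j h hh => mem_chiDual.mp (hzD j) h (hgenC hh)
  refine ⟨c, Nat.card D, x, y, z, ?_, fun j h hh => (pairing_comm_eq_one hω).mpr (hperp j h hh),
    hxy.ne_one, ?_, ?_, (relRank_eq_two_mul hω hp hV hxy hC).symm⟩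
  · rw [AddSubgroup.closure_union, hz, closure_eq, hC]
  · rintro i _ ((⟨j, rfl⟩ | ⟨j, rfl⟩) | ⟨j, rfl⟩) hne
    · exact hxy.isotropic_x i j
    · exact hxy.orthogonal i j fun hij => hne (hij ▸ rfl)
    · exact hperp j _ (Or.inl (Or.inl ⟨i, rfl⟩))
  · rintro i _ ((⟨j, rfl⟩ | ⟨j, rfl⟩) | ⟨j, rfl⟩) hne
    · exact (pairing_comm_eq_one hω).mpr (hxy.orthogonal j i fun hji => hne (hji ▸ rfl))
    · exact hxy.isotropic_y i j
    · exact hperp j _ (Or.inl (Or.inr ⟨i, rfl⟩))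

end Pairing

def sympForm (R : Type*) [CommRing R] (n : ℕ) :
    ((Fin n → R) × (Fin n → R)) →+ ((Fin n → R) × (Fin n → R)) →+ R :=
  AddMonoidHom.mk' (fun u => AddMonoidHom.mk' (symp u) fun v w => by
    simp only [symp, Prod.fst_add, Prod.snd_add, dotProduct_add, add_dotProduct]; ring)
    fun u u' => by
      ext v
      simp only [AddMonoidHom.mk'_apply, AddMonoidHom.add_apply, symp, Prod.fst_add, Prod.snd_add,
        dotProduct_add, add_dotProduct]
      ring

lemma sympForm_apply {R : Type*} [CommRing R] {n : ℕ} (u v : (Fin n → R) × (Fin n → R)) :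
    sympForm R n u v = symp u v :=
  rfl

theorem stmt_9_general (p b : ℕ) (hp : p.Prime)
    (R : Type) [CommRing R] [Fintype R] [CharP R (p ^ b)]
    (χ : AddChar R ℂ)
    (n : ℕ)
    (C : AddSubgroup ((Fin n → R) × (Fin n → R))) :
    ∃ (c d : ℕ) (u1 u2 : Fin c → (Fin n → R) × (Fin n → R))
      (z : Fin d → (Fin n → R) × (Fin n → R)),
      AddSubgroup.closure (Set.range u1 ∪ Set.range u2 ∪ Set.range z) = C ∧
      (∀ j, ∀ h ∈ Set.range u1 ∪ Set.range u2 ∪ Set.range z,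
        χ (symp (z j) h) = 1) ∧
      (∀ i, χ (symp (u1 i) (u2 i)) ≠ 1) ∧
      (∀ i, ∀ h ∈ Set.range u1 ∪ Set.range u2 ∪ Set.range z,
        h ≠ u2 i → χ (symp (u1 i) h) = 1) ∧
      (∀ i, ∀ h ∈ Set.range u1 ∪ Set.range u2 ∪ Set.range z,
        h ≠ u1 i → χ (symp (u2 i) h) = 1) ∧
      2 * c = relRank (C : Set ((Fin n → R) × (Fin n → R))) (chiDualSet (⇑χ) (C : Set ((Fin n → R) × (Fin n → R)))) := by
  have hV : ∀ v : (Fin n → R) × (Fin n → R), p ^ b • v = 0 := fun v => by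
    rw [← Nat.cast_smul_eq_nsmul R, CharP.cast_eq_zero, zero_smul]
  simpa only [coe_chiDual, sympForm_apply, chiDualSet] using exists_isotropic_hyperbolic_generators (ω := sympForm R n)
    (ψ := χ) (fun v => sub_self _) hp hV C

theorem stmt_9 (p b : ℕ) (hp : p.Prime) (hb : 0 < b)
    (R : Type) [CommRing R] [Fintype R] [IsLocalRing R] [CharP R (p ^ b)]
    (χ : AddChar R ℂ)
    (hχ : ∀ ψ : AddChar R ℂ, ∃ r : R, ∀ t : R, ψ t = χ (r * t))
    (n : ℕ)
    (C : AddSubgroup ((Fin n → R) × (Fin n → R))) :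
    ∃ (c d : ℕ) (u1 u2 : Fin c → (Fin n → R) × (Fin n → R))
      (z : Fin d → (Fin n → R) × (Fin n → R)),
      AddSubgroup.closure (Set.range u1 ∪ Set.range u2 ∪ Set.range z) = C ∧
      (∀ j, ∀ h ∈ Set.range u1 ∪ Set.range u2 ∪ Set.range z,
        χ (symp (z j) h) = 1) ∧
      (∀ i, χ (symp (u1 i) (u2 i)) ≠ 1) ∧
      (∀ i, ∀ h ∈ Set.range u1 ∪ Set.range u2 ∪ Set.range z,
        h ≠ u2 i → χ (symp (u1 i) h) = 1) ∧
      (∀ i, ∀ h ∈ Set.range u1 ∪ Set.range u2 ∪ Set.range z,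
        h ≠ u1 i → χ (symp (u2 i) h) = 1) ∧
      2 * c = relRank (C : Set ((Fin n → R) × (Fin n → R))) (chiDualSet (⇑χ) (C : Set ((Fin n → R) × (Fin n → R)))) :=
  stmt_9_general p b hp R χ n C
end

section
/- Any minimal χ-self-orthogonal extension of a submodule C ⊆ (Z_{p^a})^{2n} has entanglement degree equal to (1/2)·rank(C / (C ∩ C^{⊥_s})). -/
open scoped BigOperators

/-- The generating character `χ(z) = exp(2πi z / p^a)` of `Z_{p^a}`. -/
noncomputable def chiZ (p a : ℕ) (z : ZMod (p ^ a)) : ℂ :=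
  Complex.exp (2 * Real.pi * Complex.I * (z.val : ℂ) / ((p : ℂ) ^ a))

/-!
Lower bound: if `C'` is self-orthogonal and punctures to `C`, the tails of `C'` form a subgroup
of `(ℤ/p^a)^{2c}`, which like every such subgroup is generated by `2c` elements. Lifting them to
`C'` and puncturing gives `2c` elements generating `C` modulo `C^⊥`, because an element of `C'`
with zero tail punctures into `C^⊥`.

Upper bound: take generators of `C` modulo `C^⊥`. If their Gram matrix vanishes, `C` is already
self-orthogonal. Otherwise, since divisibility in `ℤ/p^a` is total, some entry `λ = ⟨x|y⟩`
divides all the others. Correcting the remaining generators by multiples of `x` and `y` makes them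
orthogonal to both. One new coordinate pair then turns `x, y` into `(x, λ, 0), (y, 0, 1)`, whose
product vanishes, and two generators are gone. Induct.
-/

open Submodule Set

abbrev SympSpace (R : Type*) (n : ℕ) := (Fin n → R) × (Fin n → R)

section Symp

variable {R : Type*} [CommRing R] {n : ℕ}

@[simp] lemma symp_self (u : SympSpace R n) : symp u u = 0 := by simp [symp]

lemma symp_swap (u v : SympSpace R n) : symp u v = -symp v u := by simp [symp]

@[simp] lemma symp_zero_right (u : SympSpace R n) : symp u 0 = 0 := by simp [symp]

lemma symp_add_left (u u' v : SympSpace R n) : symp (u + u') v = symp u v + symp u' v := by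
  simp [symp, add_dotProduct, dotProduct_add]; ring

lemma symp_add_right (u v v' : SympSpace R n) : symp u (v + v') = symp u v + symp u v' := by
  simp [symp, add_dotProduct, dotProduct_add]; ring

lemma symp_sub_left (u u' v : SympSpace R n) : symp (u - u') v = symp u v - symp u' v := by
  simp [symp, sub_dotProduct, dotProduct_sub]; ring

lemma symp_smul_left (r : R) (u v : SympSpace R n) : symp (r • u) v = r * symp u v := by
  simp [symp, smul_dotProduct, dotProduct_smul]; ring

lemma symp_smul_right (r : R) (u v : SympSpace R n) : symp u (r • v) = r * symp u v := by
  simp [symp, smul_dotProduct, dotProduct_smul]; ring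

def sympOrth (S : Set (SympSpace R n)) : Submodule R (SympSpace R n) where
  carrier := {v | ∀ u ∈ S, symp u v = 0}
  add_mem' hv hw u hu := by rw [symp_add_right, hv u hu, hw u hu, add_zero]
  zero_mem' u _ := symp_zero_right u
  smul_mem' r v hv u hu := by rw [symp_smul_right, hv u hu, mul_zero]

lemma subset_sympOrth_comm {S T : Set (SympSpace R n)} :
    S ⊆ sympOrth T ↔ T ⊆ sympOrth S :=
  ⟨fun h u hu v hv => by rw [symp_swap, h hv u hu, neg_zero],
    fun h u hu v hv => by rw [symp_swap, h hv u hu, neg_zero]⟩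

lemma sympOrth_anti {S T : Set (SympSpace R n)} (h : S ⊆ T) : sympOrth T ≤ sympOrth S :=
  fun _ hv u hu => hv u (h hu)

lemma sympOrth_span (S : Set (SympSpace R n)) : sympOrth (span R S : Set _) = sympOrth S := by
  refine le_antisymm (sympOrth_anti subset_span) fun v hv => ?_
  have : span R S ≤ sympOrth {v} := span_le.2 (subset_sympOrth_comm.1 (singleton_subset_iff.2 hv))
  exact singleton_subset_iff.1 (subset_sympOrth_comm.1 this)

lemma le_sympOrth_of_symp_eq_zero {C : Submodule R (SympSpace R n)} {ι : Type*}
    {f : ι → SympSpace R n} (hf : ∀ i, f i ∈ C) (hgen : C ≤ span R (range f) ⊔ sympOrth C)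
    (hgram : ∀ i j, symp (f i) (f j) = 0) : C ≤ sympOrth C := by
  have hA : span R (range f) ≤ sympOrth (span R (range f) : Set _) := by
    rw [sympOrth_span, span_le]
    rintro _ ⟨j, rfl⟩ _ ⟨i, rfl⟩
    exact hgram i j
  have hAC : span R (range f) ≤ C := span_le.2 (range_subset_iff.2 hf)
  have hC : C ≤ sympOrth (span R (range f) : Set _) :=
    hgen.trans (sup_le hA (sympOrth_anti hAC))
  exact hgen.trans (sup_le (subset_sympOrth_comm.1 hC) le_rfl)

end Symp

section Puncture

variable {R : Type*} {n : ℕ}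

def SympSpace.snoc (z : SympSpace R n) (α β : R) : SympSpace R (n + 1) :=
  (Fin.snoc z.1 α, Fin.snoc z.2 β)

@[simp] lemma punct_snoc (z : SympSpace R n) (α β : R) : punct n 1 (z.snoc α β) = z :=
  Prod.ext (funext fun i => Fin.snoc_castSucc (α := fun _ => R) α z.1 i)
    (funext fun i => Fin.snoc_castSucc (α := fun _ => R) β z.2 i)

variable [CommRing R]

def punctₗ (R : Type*) [CommRing R] (n c : ℕ) : SympSpace R (n + c) →ₗ[R] SympSpace R n where
  toFun := punct n c
  map_add' _ _ := rfl
  map_smul' _ _ := rfl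

@[simp] lemma punctₗ_apply {c : ℕ} (u : SympSpace R (n + c)) : punctₗ R n c u = punct n c u := rfl

def tailₗ (R : Type*) [CommRing R] (n c : ℕ) : SympSpace R (n + c) →ₗ[R] SympSpace R c where
  toFun u := (fun i => u.1 (Fin.natAdd n i), fun i => u.2 (Fin.natAdd n i))
  map_add' _ _ := rfl
  map_smul' _ _ := rfl

lemma symp_eq_punct_add_tail {c : ℕ} (u v : SympSpace R (n + c)) :
    symp u v = symp (punct n c u) (punct n c v) + symp (tailₗ R n c u) (tailₗ R n c v) := by
  simp only [symp, punct, tailₗ, dotProduct, LinearMap.coe_mk, AddHom.coe_mk, Fin.sum_univ_add]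
  ring

lemma symp_snoc_snoc (z w : SympSpace R n) (α β γ δ : R) :
    symp (z.snoc α β) (w.snoc γ δ) = symp z w + (β * γ - δ * α) := by
  simp [symp, SympSpace.snoc, dotProduct, Fin.sum_univ_castSucc]
  ring

def embₗ (R : Type*) [CommRing R] (n : ℕ) : SympSpace R n →ₗ[R] SympSpace R (n + 1) where
  toFun z := z.snoc 0 0
  map_add' u v := by
    ext j <;> refine Fin.lastCases ?_ (fun i => ?_) j <;> simp [SympSpace.snoc]
  map_smul' r u := by
    ext j <;> refine Fin.lastCases ?_ (fun i => ?_) j <;> simp [SympSpace.snoc]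

lemma punctₗ_comp_embₗ : punctₗ R n 1 ∘ₗ embₗ R n = LinearMap.id :=
  LinearMap.ext fun z => punct_snoc z 0 0

lemma symp_embₗ_right (u : SympSpace R (n + 1)) (d : SympSpace R n) :
    symp u (embₗ R n d) = symp (punct n 1 u) d := by
  have htail : tailₗ R n 1 (embₗ R n d) = 0 := by
    ext i <;> simp [tailₗ, embₗ, SympSpace.snoc, Fin.snoc]
  rw [symp_eq_punct_add_tail, htail, symp_zero_right, add_zero]
  exact congrArg _ (punct_snoc d 0 0)

def reindexₗ {m m' : ℕ} (e : Fin m ≃ Fin m') : SympSpace R m ≃ₗ[R] SympSpace R m' :=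
  (LinearEquiv.funCongrLeft R R e.symm).prodCongr (LinearEquiv.funCongrLeft R R e.symm)

lemma symp_reindexₗ {m m' : ℕ} (e : Fin m ≃ Fin m') (u v : SympSpace R m) :
    symp (reindexₗ e u) (reindexₗ e v) = symp u v := by
  simp [symp, reindexₗ, dotProduct, LinearMap.funLeft, e.symm.sum_comp (fun i => u.2 i * v.1 i),
    e.symm.sum_comp (fun i => v.2 i * u.1 i)]

lemma punct_reindexₗ_finCongr {c c' : ℕ} (u : SympSpace R (n + c + c')) :
    punct n (c + c') (reindexₗ (finCongr (add_assoc n c c')) u) = punct n c (punct (n + c) c' u) :=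
  rfl

end Puncture

section Extension

variable {R : Type*} [CommRing R] {n : ℕ}

def HasSelfOrthogonalExtension (C : Submodule R (SympSpace R n)) (c : ℕ) : Prop :=
  ∃ C' : Submodule R (SympSpace R (n + c)), C' ≤ sympOrth C' ∧ C'.map (punctₗ R n c) = C

lemma hasSelfOrthogonalExtension_zero {C : Submodule R (SympSpace R n)} (hC : C ≤ sympOrth C) :
    HasSelfOrthogonalExtension C 0 :=
  ⟨C, hC, Submodule.map_id C⟩

lemma HasSelfOrthogonalExtension.of_map_punct {c c' : ℕ} {C : Submodule R (SympSpace R n)}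
    {C₁ : Submodule R (SympSpace R (n + c))} (hC₁ : C₁.map (punctₗ R n c) = C)
    (h : HasSelfOrthogonalExtension C₁ c') : HasSelfOrthogonalExtension C (c + c') := by
  obtain ⟨C₂, hC₂, hC₂C₁⟩ := h
  let e : SympSpace R (n + c + c') →ₗ[R] SympSpace R (n + (c + c')) :=
    (reindexₗ (finCongr (add_assoc n c c'))).toLinearMap
  refine ⟨C₂.map e, ?_, ?_⟩
  · rintro _ ⟨v, hv, rfl⟩ _ ⟨u, hu, rfl⟩
    exact (symp_reindexₗ _ u v).trans (hC₂ hv u hu)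
  · have : punctₗ R n (c + c') ∘ₗ e = punctₗ R n c ∘ₗ punctₗ R (n + c) c' :=
      LinearMap.ext punct_reindexₗ_finCongr
    rw [← Submodule.map_comp, this, Submodule.map_comp, hC₂C₁, hC₁]

end Extension

section Step

variable {R : Type*} [CommRing R] {n : ℕ}

theorem exists_hyperbolic_extension {C : Submodule R (SympSpace R n)} {x y : SympSpace R n}
    (hx : x ∈ C) (hy : y ∈ C) {ι : Type*} {g : ι → SympSpace R n} (hg : ∀ i, g i ∈ C)
    (hgxy : ({x, y} : Set (SympSpace R n)) ⊆ sympOrth (range g))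
    (hgen : C ≤ span R ({x, y} ∪ range g) ⊔ sympOrth C) :
    ∃ C₁ : Submodule R (SympSpace R (n + 1)), C₁.map (punctₗ R n 1) = C ∧
      (∀ i, embₗ R n (g i) ∈ C₁) ∧ C₁ ≤ span R (range (embₗ R n ∘ g)) ⊔ sympOrth C₁ := by
  set X := x.snoc (symp x y) 0
  set Y := y.snoc 0 1
  set W := span R (range g) ⊔ C ⊓ sympOrth C
  set C₁ := span R {X, Y} ⊔ W.map (embₗ R n)
  have hxyC : {x, y} ⊆ (C : Set _) := pair_subset hx hy
  have hgC : range g ⊆ C := range_subset_iff.2 hg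
  have hWC : W ≤ C := sup_le (span_le.2 hgC) inf_le_left
  have hW : W ≤ sympOrth {x, y} :=
    sup_le (span_le.2 (subset_sympOrth_comm.1 hgxy)) (inf_le_right.trans (sympOrth_anti hxyC))
  have hmap : C₁.map (punctₗ R n 1) = C := by
    have hX : punctₗ R n 1 X = x := punct_snoc _ _ _
    have hY : punctₗ R n 1 Y = y := punct_snoc _ _ _
    rw [Submodule.map_sup, map_span, ← map_comp, punctₗ_comp_embₗ, map_id, image_pair, hX, hY]
    refine le_antisymm (sup_le (span_le.2 hxyC) hWC) ?_
    have hA : span R ({x, y} ∪ range g) ≤ C := span_le.2 (union_subset hxyC hgC)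
    calc C ≤ span R ({x, y} ∪ range g) ⊔ sympOrth C ⊓ C :=
          (le_inf hgen le_rfl).trans (sup_inf_assoc_of_le _ hA).le
      _ = span R {x, y} ⊔ W := by rw [span_union, sup_assoc, inf_comm]
  have hXY : C₁ ≤ sympOrth {X, Y} := by
    refine sup_le (span_le.2 ?_) ?_
    · have : symp X Y = 0 := by simp [X, Y, symp_snoc_snoc]
      rintro _ (rfl | rfl) _ (rfl | rfl) <;> simp [this, symp_swap Y X]
    · rintro _ ⟨w, hw, rfl⟩ _ (rfl | rfl) <;> rw [symp_embₗ_right, punct_snoc]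
      exacts [hW hw x (by simp), hW hw y (by simp)]
  have hE : (C ⊓ sympOrth C).map (embₗ R n) ≤ sympOrth C₁ := by
    rintro _ ⟨d, hd, rfl⟩ u hu
    rw [symp_embₗ_right]
    exact hd.2 _ (hmap ▸ mem_map_of_mem hu)
  refine ⟨C₁, hmap, fun i => mem_sup_right (mem_map_of_mem (mem_sup_left
    (subset_span (mem_range_self i)))), ?_⟩
  have hWmap : W.map (embₗ R n) =
      span R (range (embₗ R n ∘ g)) ⊔ (C ⊓ sympOrth C).map (embₗ R n) := by
    rw [Submodule.map_sup, map_span, ← range_comp]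
  refine sup_le ((span_le.2 (subset_sympOrth_comm.1 hXY)).trans le_sup_right) ?_
  rw [hWmap]
  exact sup_le le_sup_left (hE.trans le_sup_right)

end Step

lemma PreValuationRing.exists_dvd_forall {R α : Type*} [CommRing R] [PreValuationRing R]
    [Nontrivial R] [Finite α] [Nonempty α] (v : α → R) : ∃ a, ∀ b, v a ∣ v b := by
  classical
  obtain ⟨a, ha⟩ := Finite.exists_max fun b => Ideal.span {v b}
  exact ⟨a, fun b => Ideal.span_singleton_le_span_singleton.1 (ha b)⟩

section Induction

variable {R : Type*} [CommRing R] {n : ℕ}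

lemma exists_orthogonal_correction {x y : SympSpace R n} {ι : Type*} (f : ι → SympSpace R n)
    (hx : ∀ i, symp x y ∣ symp (f i) x) (hy : ∀ i, symp x y ∣ symp (f i) y) :
    ∃ g : ι → SympSpace R n, ({x, y} : Set (SympSpace R n)) ⊆ sympOrth (range g) ∧
      ∀ i, g i - f i ∈ span R {x, y} := by
  choose b hb using hx
  choose c hc using hy
  have hgx (i : ι) : symp (f i + b i • y - c i • x) x = 0 := by
    simp only [symp_sub_left, symp_add_left, symp_smul_left, hb, symp_self, symp_swap y x]
    ring
  have hgy (i : ι) : symp (f i + b i • y - c i • x) y = 0 := by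
    simp only [symp_sub_left, symp_add_left, symp_smul_left, hc, symp_self]
    ring
  refine ⟨fun i => f i + b i • y - c i • x, ?_, fun i => ?_⟩
  · rintro _ (rfl | rfl) _ ⟨i, rfl⟩
    exacts [hgx i, hgy i]
  · rw [show f i + b i • y - c i • x - f i = b i • y - c i • x by abel]
    exact sub_mem (smul_mem _ _ (subset_span (by simp))) (smul_mem _ _ (subset_span (by simp)))

theorem exists_hasSelfOrthogonalExtension [PreValuationRing R] (k : ℕ) :
    ∀ {n : ℕ} (C : Submodule R (SympSpace R n)) {ι : Type*} [Fintype ι] (f : ι → SympSpace R n),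
      Fintype.card ι = k → (∀ i, f i ∈ C) → C ≤ span R (range f) ⊔ sympOrth C →
      ∃ c, 2 * c ≤ k ∧ HasSelfOrthogonalExtension C c := by
  induction k using Nat.strong_induction_on with
  | _ k ih =>
  intro n C ι _ f hk hf hgen
  by_cases hgram : ∀ i j, symp (f i) (f j) = 0
  · exact ⟨0, Nat.zero_le _,
      hasSelfOrthogonalExtension_zero (le_sympOrth_of_symp_eq_zero hf hgen hgram)⟩
  push Not at hgram
  obtain ⟨i₁, j₁, hne⟩ := hgram
  have : Nontrivial R := nontrivial_of_ne _ _ hne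
  have : Nonempty ι := ⟨i₁⟩
  obtain ⟨⟨i₀, j₀⟩, hdvd⟩ :=
    PreValuationRing.exists_dvd_forall fun q : ι × ι => symp (f q.1) (f q.2)
  dsimp only at hdvd
  have hij : i₀ ≠ j₀ := by
    rintro rfl
    exact hne (by simpa using hdvd (i₁, j₁))
  classical
  set s : Finset ι := {i₀, j₀}ᶜ
  obtain ⟨g, hgxy, hgf⟩ := exists_orthogonal_correction (fun i : s => f i)
    (fun i => hdvd (i, i₀)) (fun i => hdvd (i, j₀))
  have hg : ∀ i, g i ∈ C := fun i => by
    simpa using add_mem (span_le.2 (pair_subset (hf i₀) (hf j₀)) (hgf i)) (hf i)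
  have hgen' : C ≤ span R ({f i₀, f j₀} ∪ range g) ⊔ sympOrth C := by
    refine hgen.trans (sup_le_sup_right (span_le.2 ?_) _)
    rintro _ ⟨i, rfl⟩
    by_cases hi : i ∈ s
    · have hgi : g ⟨i, hi⟩ ∈ span R ({f i₀, f j₀} ∪ range g) := subset_span (Or.inr ⟨_, rfl⟩)
      simpa using sub_mem hgi (span_mono subset_union_left (hgf ⟨i, hi⟩))
    · obtain rfl | rfl : i = i₀ ∨ i = j₀ := by
        simpa only [s, Finset.mem_compl, not_not, Finset.mem_insert, Finset.mem_singleton] using hi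
      exacts [subset_span (by simp), subset_span (by simp)]
  obtain ⟨C₁, hC₁, hF, hgen₁⟩ := exists_hyperbolic_extension (hf i₀) (hf j₀) hg hgxy hgen'
  have hcard : Fintype.card s + 2 = k := by
    have := Finset.card_le_univ ({i₀, j₀} : Finset ι)
    rw [Fintype.card_coe, Finset.card_compl, ← hk]
    rw [Finset.card_pair hij] at this ⊢
    omega
  obtain ⟨c, hc, hext⟩ := ih _ (by omega) C₁ (embₗ R n ∘ g) rfl hF hgen₁
  exact ⟨1 + c, by omega, hext.of_map_punct hC₁⟩

end Induction

lemma ZMod.exists_associated_prime_pow {p a : ℕ} (hp : p.Prime) (x : ZMod (p ^ a)) :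
    ∃ v, Associated ((p : ZMod (p ^ a)) ^ v) x := by
  have : NeZero (p ^ a) := ⟨pow_ne_zero a hp.ne_zero⟩
  rcases eq_or_ne x.val 0 with hx | hx
  · refine ⟨a, ?_⟩
    rw [(ZMod.val_eq_zero x).1 hx, ← Nat.cast_pow, ZMod.natCast_self]
  · refine ⟨x.val.factorization p,
      ZMod.unitOfCoprime _ ((Nat.coprime_ordCompl hp hx).symm.pow_right a), ?_⟩
    rw [ZMod.coe_unitOfCoprime, ← Nat.cast_pow, ← Nat.cast_mul,
      Nat.ordProj_mul_ordCompl_eq_self, ZMod.natCast_zmod_val]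

instance ZMod.preValuationRing_prime_pow {p a : ℕ} [Fact p.Prime] :
    PreValuationRing (ZMod (p ^ a)) :=
  PreValuationRing.iff_dvd_total.2 ⟨fun x y => by
    obtain ⟨v, hv⟩ := ZMod.exists_associated_prime_pow Fact.out x
    obtain ⟨w, hw⟩ := ZMod.exists_associated_prime_pow Fact.out y
    rcases le_total v w with h | h
    · exact .inl (hv.symm.dvd.trans ((pow_dvd_pow _ h).trans hw.dvd))
    · exact .inr (hw.symm.dvd.trans ((pow_dvd_pow _ h).trans hv.dvd))⟩

lemma chiZ_eq_one_iff {p a : ℕ} (hp : p ≠ 0) (z : ZMod (p ^ a)) : chiZ p a z = 1 ↔ z = 0 := by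
  have : NeZero (p ^ a) := ⟨pow_ne_zero a hp⟩
  have h : chiZ p a z = ZMod.toCircle z := by
    rw [ZMod.toCircle_apply, chiZ, Nat.cast_pow]
  rw [h, Circle.coe_eq_one, ← ZMod.injective_toCircle.eq_iff, AddChar.map_zero_eq_one]

lemma AddSubgroup.exists_fin_generators_of_surjective {M ι : Type*} [AddCommGroup M] [Fintype ι]
    {φ : (ι → ℤ) →+ M} (hφ : Function.Surjective φ) (H : AddSubgroup M) :
    ∃ r ≤ Fintype.card ι, ∃ w : Fin r → M, (∀ i, w i ∈ H) ∧
      ∀ x ∈ H, ∃ g : Fin r → ℤ, ∑ i, g i • w i = x := by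
  obtain ⟨r, B⟩ := Submodule.basisOfPid (Pi.basisFun ℤ ι) (H.comap φ).toIntSubmodule
  refine ⟨r, ?_, fun i => φ (B i), fun i => (B i).2, fun x hx => ?_⟩
  · simpa [Module.finrank_eq_card_basis B, Module.finrank_fintype_fun_eq_card] using
      Submodule.finrank_le (H.comap φ).toIntSubmodule
  · obtain ⟨y, rfl⟩ := hφ x
    refine ⟨B.repr ⟨y, hx⟩, ?_⟩
    have hy : ((∑ i, B.repr ⟨y, hx⟩ i • B i : (H.comap φ).toIntSubmodule) : ι → ℤ) = y :=
      congrArg Subtype.val (B.sum_repr ⟨y, hx⟩)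
    conv_rhs => rw [← hy]
    simp only [Submodule.coe_sum, Submodule.coe_smul, map_sum, map_zsmul]

lemma exists_fin_generators_sympSpace_zmod {N c : ℕ} (H : AddSubgroup (SympSpace (ZMod N) c)) :
    ∃ r ≤ 2 * c, ∃ w : Fin r → SympSpace (ZMod N) c, (∀ i, w i ∈ H) ∧
      ∀ x ∈ H, ∃ g : Fin r → ℤ, ∑ i, g i • w i = x := by
  let φ : (Fin c ⊕ Fin c → ℤ) →+ SympSpace (ZMod N) c :=
    { toFun g := (fun i => (g (.inl i) : ZMod N), fun i => (g (.inr i) : ZMod N))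
      map_zero' := by ext <;> simp
      map_add' _ _ := by ext <;> simp }
  have hφ : Function.Surjective φ := fun u =>
    ⟨Sum.elim (fun i => (u.1 i).cast) (fun i => (u.2 i).cast), by ext <;> simp [φ]⟩
  simpa [two_mul] using AddSubgroup.exists_fin_generators_of_surjective hφ H

lemma relRank_le {V : Type*} [AddCommGroup V] {C D : Set V} {k : ℕ} {f : Fin k → V}
    (hf : ∀ i, f i ∈ C) (hgen : ∀ x ∈ C, ∃ g : Fin k → ℤ, x - ∑ i, g i • f i ∈ D) :
    relRank C D ≤ k :=
  Nat.sInf_le ⟨f, hf, hgen⟩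

lemma exists_fin_relRank {V : Type*} [AddCommGroup V] {C D : Set V} {k : ℕ} {f : Fin k → V}
    (hf : ∀ i, f i ∈ C) (hgen : ∀ x ∈ C, ∃ g : Fin k → ℤ, x - ∑ i, g i • f i ∈ D) :
    ∃ f : Fin (relRank C D) → V, (∀ i, f i ∈ C) ∧
      ∀ x ∈ C, ∃ g : Fin _ → ℤ, x - ∑ i, g i • f i ∈ D :=
  Nat.sInf_mem (s := {k | ∃ f : Fin k → V, (∀ i, f i ∈ C) ∧
    ∀ x ∈ C, ∃ g : Fin k → ℤ, x - ∑ i, g i • f i ∈ D}) ⟨k, f, hf, hgen⟩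

theorem relRank_le_of_selfOrthogonal_extension {N n c : ℕ} {C : Set (SympSpace (ZMod N) n)}
    (C' : AddSubgroup (SympSpace (ZMod N) (n + c))) (hC' : ∀ u ∈ C', ∀ v ∈ C', symp u v = 0)
    (himg : punct n c '' C' = C) : relRank C {v | ∀ x ∈ C, symp x v = 0} ≤ 2 * c := by
  subst himg
  let τ := (tailₗ (ZMod N) n c).toAddMonoidHom
  obtain ⟨r, hr, w, hw, hgen⟩ := exists_fin_generators_sympSpace_zmod (C'.map τ)
  choose u hu hut using hw
  refine le_trans (relRank_le (f := fun i => punct n c (u i))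
    (fun i => mem_image_of_mem _ (hu i)) ?_) hr
  rintro _ ⟨z, hz, rfl⟩
  obtain ⟨g, hg⟩ := hgen _ (AddSubgroup.mem_map_of_mem τ hz)
  refine ⟨g, ?_⟩
  set z' := z - ∑ i, g i • u i
  have hz' : z' ∈ C' := sub_mem hz (sum_mem fun i _ => zsmul_mem (hu i) _)
  have htail : τ z' = 0 := by simp only [z', map_sub, map_sum, map_zsmul, hut, hg, sub_self]
  have hpunct : punct n c z' = punct n c z - ∑ i, g i • punct n c (u i) := by
    simp only [z', ← punctₗ_apply, map_sub, map_sum, map_zsmul]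
  rintro _ ⟨y, hy, rfl⟩
  have := symp_eq_punct_add_tail y z'
  rw [show tailₗ (ZMod N) n c z' = 0 from htail, symp_zero_right, add_zero, hC' y hy z' hz',
    hpunct] at this
  exact this.symm

lemma exists_fin_relRank_generators {N n : ℕ} (C : AddSubgroup (SympSpace (ZMod N) n))
    {D : Set (SympSpace (ZMod N) n)} (hD : 0 ∈ D) :
    ∃ f : Fin (relRank (C : Set (SympSpace (ZMod N) n)) D) → SympSpace (ZMod N) n,
      (∀ i, f i ∈ C) ∧ ∀ x ∈ C, ∃ g : Fin _ → ℤ, x - ∑ i, g i • f i ∈ D := by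
  obtain ⟨r, -, w, hw, hgen⟩ := exists_fin_generators_sympSpace_zmod C
  refine exists_fin_relRank hw fun x hx => (hgen x hx).imp fun g hg => ?_
  rwa [hg, sub_self]

lemma le_span_sup_of_forall_exists_zsmul {R M ι : Type*} [Ring R] [AddCommGroup M] [Module R M]
    [Fintype ι] {f : ι → M} {C D : Submodule R M}
    (h : ∀ x ∈ C, ∃ g : ι → ℤ, x - ∑ i, g i • f i ∈ D) : C ≤ span R (range f) ⊔ D := fun x hx => by
  obtain ⟨g, hg⟩ := h x hx
  have hs : ∑ i, g i • f i ∈ span R (range f) :=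
    sum_mem fun i _ => zsmul_mem (subset_span (mem_range_self i)) _
  exact mem_sup.2 ⟨_, hs, _, hg, add_sub_cancel _ _⟩

theorem stmt_12_general (p a n : ℕ) (hp : p.Prime)
    (C : Submodule (ZMod (p ^ a)) ((Fin n → ZMod (p ^ a)) × (Fin n → ZMod (p ^ a)))) :
    ∃ c0 : ℕ,
      2 * c0 = relRank (C : Set ((Fin n → ZMod (p ^ a)) × (Fin n → ZMod (p ^ a))))
          {v : (Fin n → ZMod (p ^ a)) × (Fin n → ZMod (p ^ a)) |
            ∀ x ∈ C, symp x v = 0} ∧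
      IsLeast {c : ℕ |
        ∃ C' : AddSubgroup ((Fin (n + c) → ZMod (p ^ a)) × (Fin (n + c) → ZMod (p ^ a))),
          (∀ x ∈ C', ∀ y ∈ C', chiZ p a (symp x y) = 1) ∧
          punct n c '' (C' : Set ((Fin (n + c) → ZMod (p ^ a)) × (Fin (n + c) → ZMod (p ^ a)))) = (C : Set ((Fin n → ZMod (p ^ a)) × (Fin n → ZMod (p ^ a))))} c0 := by
  have : Fact p.Prime := ⟨hp⟩
  obtain ⟨f, hf, hgen⟩ := exists_fin_relRank_generators C.toAddSubgroup
    (D := {v | ∀ x ∈ C, symp x v = 0}) fun x _ => symp_zero_right x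
  have hgen' : C ≤ span (ZMod (p ^ a)) (range f) ⊔ sympOrth (C : Set _) :=
    le_span_sup_of_forall_exists_zsmul hgen
  obtain ⟨c, hck, C', hC', hC'C⟩ :=
    exists_hasSelfOrthogonalExtension _ C f (Fintype.card_fin _) hf hgen'
  have himg : punct n c '' (C'.toAddSubgroup : Set _) = (C : Set (SympSpace (ZMod (p ^ a)) n)) := by
    rw [← hC'C, Submodule.map_coe]
    rfl
  refine ⟨c, le_antisymm hck (relRank_le_of_selfOrthogonal_extension _
    (fun u hu v hv => hC' hv u hu) himg), ⟨C'.toAddSubgroup, fun u hu v hv => ?_, himg⟩, ?_⟩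
  · rw [hC' hv u hu]
    exact (chiZ_eq_one_iff hp.ne_zero 0).2 rfl
  · rintro c' ⟨C'', hchi, himg'⟩
    have := hck.trans (relRank_le_of_selfOrthogonal_extension C''
      (fun u hu v hv => (chiZ_eq_one_iff hp.ne_zero _).1 (hchi u hu v hv)) himg')
    omega

theorem stmt_12 (p a n : ℕ) (hp : p.Prime) (ha : 1 ≤ a)
    (C : Submodule (ZMod (p ^ a)) ((Fin n → ZMod (p ^ a)) × (Fin n → ZMod (p ^ a)))) :
    ∃ c0 : ℕ,
      2 * c0 = relRank (C : Set ((Fin n → ZMod (p ^ a)) × (Fin n → ZMod (p ^ a))))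
          {v : (Fin n → ZMod (p ^ a)) × (Fin n → ZMod (p ^ a)) |
            ∀ x ∈ C, symp x v = 0} ∧
      IsLeast {c : ℕ |
        ∃ C' : AddSubgroup ((Fin (n + c) → ZMod (p ^ a)) × (Fin (n + c) → ZMod (p ^ a))),
          (∀ x ∈ C', ∀ y ∈ C', chiZ p a (symp x y) = 1) ∧
          punct n c '' (C' : Set ((Fin (n + c) → ZMod (p ^ a)) × (Fin (n + c) → ZMod (p ^ a)))) = (C : Set ((Fin n → ZMod (p ^ a)) × (Fin n → ZMod (p ^ a))))} c0 :=
  stmt_12_general p a n hp C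
end
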